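/- With the setup below, assume in addition that the b_{dj} are identically distributed with common mean μ = E[b_{dj}] ∈ ℝ². Define G_γ(k') = (1/(r² n_d)) Σ_{d∈{0,…,r−1}²} Σ_{j=1}^{n_d} exp(i q_γ·b_{dj}). If ε ≤ 1/(πr) and q_γ ≠ 0, then for every c > 0, P( |G_γ(k') − 1| ≥ ‖q_γ‖₂‖μ‖₂ + ‖q_γ‖₁² ε_r² / 2 + √2 ( c‖q_γ‖₁ ε + ‖q_γ‖₁³ ε_r³ / 3 ) ) ≤ 4 exp( − c² n_d / 8 ). -/

import Mathlib

open MeasureTheory ProbabilityTheory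

/-- The ℓ¹ norm on ℝ². -/
def srL1 (q : ℝ × ℝ) : ℝ := |q.1| + |q.2|

/-- The Euclidean (ℓ²) norm on ℝ². -/
noncomputable def srL2 (q : ℝ × ℝ) : ℝ := Real.sqrt (q.1 ^ 2 + q.2 ^ 2)

/-- `f(q, εr) = ‖q‖₁² εr²/2 + ‖q‖₁³ εr³/6`. -/
noncomputable def srF (q : ℝ × ℝ) (εr : ℝ) : ℝ :=
  srL1 q ^ 2 * εr ^ 2 / 2 + srL1 q ^ 3 * εr ^ 3 / 6

/-- The centered fluctuation term
`B_G = (1/(r² n_d)) Σ_d Σ_j (exp(i q·b_{dj}) − E[exp(i q·b_{dj})])`. -/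
noncomputable def srBG {Ω : Type*} [MeasureSpace Ω] (r nd : ℕ)
    (b : Fin r × Fin r → Fin nd → Ω → ℝ × ℝ) (q : ℝ × ℝ) (ω : Ω) : ℂ :=
  ((r : ℂ) ^ 2 * (nd : ℂ))⁻¹ * ∑ d : Fin r × Fin r, ∑ j : Fin nd,
    (Complex.exp (Complex.I * ((q.1 * (b d j ω).1 + q.2 * (b d j ω).2 : ℝ) : ℂ))
      - ∫ ω', Complex.exp (Complex.I * ((q.1 * (b d j ω').1 + q.2 * (b d j ω').2 : ℝ) : ℂ)))

/-- The coefficient `G_α(k') = (1/(r² n_d)) Σ_d Σ_j exp(−i θ_{αd}) exp(i q_α·b_{dj})`,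
parametrized by `δ = α − γ` (so that `θ_{αd} = (2π/r) δ·d`) and `q = q_α`. -/
noncomputable def srG {Ω : Type*} (r nd : ℕ)
    (b : Fin r × Fin r → Fin nd → Ω → ℝ × ℝ) (δ : ℤ × ℤ) (q : ℝ × ℝ) (ω : Ω) : ℂ :=
  ((r : ℂ) ^ 2 * (nd : ℂ))⁻¹ * ∑ d : Fin r × Fin r, ∑ j : Fin nd,
    Complex.exp (-Complex.I *
        ((2 * Real.pi / (r : ℝ) *
          ((δ.1 * ((d.1 : ℕ) : ℤ) + δ.2 * ((d.2 : ℕ) : ℤ) : ℤ) : ℝ) : ℝ) : ℂ))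
      * Complex.exp (Complex.I * ((q.1 * (b d j ω).1 + q.2 * (b d j ω).2 : ℝ) : ℂ))

/-!
Put `Z_p = q·b_p`, so `|Z_p| ≤ x := ‖q‖₁ ε_r ≤ 2`, and let `M = r² n_d`. Then `G − 1` is the
bias `M⁻¹ Σ_p (E e^{iZ_p} − 1)` plus the fluctuation `M⁻¹ Σ_p (e^{iZ_p} − E e^{iZ_p})`. The
Taylor bounds `|cos t − 1| ≤ t²/2` and `|sin t − t| ≤ |t|³/6` give
`‖E e^{iZ_p} − 1‖ ≤ |q·μ| + x²/2 + x³/6`, and `|q·μ| ≤ ‖q‖₂ ‖μ‖₂`. A fluctuation of modulus at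
least `√2 τ` has real or imaginary part of size at least `τ`; both are averages of `M`
independent variables ranging in intervals of length `2x`, so Hoeffding's inequality bounds each
event by `2 exp(−M τ²/(2x²))`, and for `τ = c ‖q‖₁ ε` the exponent is `−c² n_d / 2`.
-/

open Complex

lemma Complex.re_exp_I_mul_ofReal (θ : ℝ) : (exp (I * θ)).re = Real.cos θ := by
  rw [mul_comm, exp_ofReal_mul_I_re]

lemma Complex.im_exp_I_mul_ofReal (θ : ℝ) : (exp (I * θ)).im = Real.sin θ := by
  rw [mul_comm, exp_ofReal_mul_I_im]

lemma Real.abs_cos_sub_one_le (θ : ℝ) : |Real.cos θ - 1| ≤ θ ^ 2 / 2 :=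
  abs_le.2 ⟨by linarith [Real.one_sub_sq_div_two_le_cos (x := θ)],
    by linarith [Real.cos_le_one θ, sq_nonneg θ]⟩

lemma Complex.norm_exp_I_mul_ofReal_sub_one_sub_le (θ : ℝ) :
    ‖exp (I * θ) - 1 - I * θ‖ ≤ θ ^ 2 / 2 + |θ| ^ 3 / 6 := by
  refine (norm_le_abs_re_add_abs_im _).trans (add_le_add ?_ ?_)
  · simpa [re_exp_I_mul_ofReal] using Real.abs_cos_sub_one_le θ
  · simpa [im_exp_I_mul_ofReal, abs_sub_comm] using Real.abs_sub_sin_le θ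

lemma Complex.le_abs_re_or_le_abs_im_of_sqrt_two_mul_le_norm {z : ℂ} {τ : ℝ}
    (h : √2 * τ ≤ ‖z‖) : τ ≤ |z.re| ∨ τ ≤ |z.im| :=
  le_max_iff.1 <| le_of_mul_le_mul_left (h.trans (norm_le_sqrt_two_mul_max z)) (by positivity)

lemma Complex.le_abs_re_or_le_abs_im_sum_sub_of_le_norm_average_sub_one {ι : Type*} [Fintype ι]
    [Nonempty ι] {w e : ι → ℂ} {B τ : ℝ} (he : ∀ i, ‖e i - 1‖ ≤ B)
    (h : B + √2 * τ ≤ ‖(Fintype.card ι : ℂ)⁻¹ * ∑ i, w i - 1‖) :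
    Fintype.card ι * τ ≤ |(∑ i, (w i - e i)).re| ∨
      Fintype.card ι * τ ≤ |(∑ i, (w i - e i)).im| := by
  have hM : (0 : ℝ) < Fintype.card ι := by exact_mod_cast Fintype.card_pos
  have h_decomp : (Fintype.card ι : ℂ)⁻¹ * ∑ i, w i - 1
      = (Fintype.card ι : ℂ)⁻¹ * ∑ i, (e i - 1) + (Fintype.card ι : ℂ)⁻¹ * ∑ i, (w i - e i) := by
    simp only [Finset.sum_sub_distrib, Finset.sum_const, Finset.card_univ, nsmul_eq_mul, mul_one]
    field_simp
    ring
  have h_bias : ‖(Fintype.card ι : ℂ)⁻¹ * ∑ i, (e i - 1)‖ ≤ B := by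
    rw [norm_mul, norm_inv, norm_natCast, inv_mul_le_iff₀ hM]
    calc ‖∑ i, (e i - 1)‖ ≤ ∑ i, ‖e i - 1‖ := norm_sum_le _ _
      _ ≤ Fintype.card ι * B := by
        simpa using Finset.sum_le_card_nsmul Finset.univ _ B fun i _ ↦ he i
  refine le_abs_re_or_le_abs_im_of_sqrt_two_mul_le_norm ?_
  have h_fluct := h.trans (h_decomp ▸ norm_add_le _ _)
  rw [norm_mul _ (∑ i, (w i - e i)), norm_inv, norm_natCast] at h_fluct
  rw [mul_left_comm, ← le_inv_mul_iff₀ hM]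
  linarith

namespace MeasureTheory

variable {Ω : Type*} [MeasurableSpace Ω] {μ : Measure Ω}

lemma integrable_exp_I_mul [IsFiniteMeasure μ] {Z : Ω → ℝ} (hZ : Measurable Z) :
    Integrable (fun ω ↦ exp (I * Z ω)) μ :=
  .of_bound (by fun_prop) 1 (ae_of_all _ fun _ ↦ (norm_exp_I_mul_ofReal _).le)

lemma re_integral_exp_I_mul [IsFiniteMeasure μ] {Z : Ω → ℝ} (hZ : Measurable Z) :
    (∫ ω, exp (I * Z ω) ∂μ).re = ∫ ω, Real.cos (Z ω) ∂μ := by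
  simp_rw [← re_exp_I_mul_ofReal]
  exact (integral_re (integrable_exp_I_mul hZ)).symm

lemma im_integral_exp_I_mul [IsFiniteMeasure μ] {Z : Ω → ℝ} (hZ : Measurable Z) :
    (∫ ω, exp (I * Z ω) ∂μ).im = ∫ ω, Real.sin (Z ω) ∂μ := by
  simp_rw [← im_exp_I_mul_ofReal]
  exact (integral_im (integrable_exp_I_mul hZ)).symm

lemma norm_integral_exp_I_mul_sub_one_le [IsProbabilityMeasure μ] {Z : Ω → ℝ}
    (hZm : Measurable Z) {x : ℝ} (hZ : ∀ ω, |Z ω| ≤ x) :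
    ‖∫ ω, exp (I * Z ω) ∂μ - 1‖ ≤ |∫ ω, Z ω ∂μ| + x ^ 2 / 2 + x ^ 3 / 6 := by
  have h_int_exp := integrable_exp_I_mul (μ := μ) hZm
  have h_int : Integrable Z μ := .of_bound hZm.aestronglyMeasurable x (ae_of_all _ hZ)
  have h_split : ∫ ω, exp (I * Z ω) ∂μ - 1
      = ∫ ω, (exp (I * Z ω) - 1 - I * Z ω) ∂μ + I * ((∫ ω, Z ω ∂μ : ℝ) : ℂ) := by
    rw [integral_sub, integral_sub h_int_exp (integrable_const 1), integral_const_mul,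
      integral_complex_ofReal]
    · simp
    · exact h_int_exp.sub (integrable_const 1)
    · exact h_int.ofReal.const_mul I
  have h_remainder : ‖∫ ω, (exp (I * Z ω) - 1 - I * Z ω) ∂μ‖ ≤ x ^ 2 / 2 + x ^ 3 / 6 := by
    simpa using norm_integral_le_of_norm_le_const (μ := μ) (ae_of_all _ fun ω ↦
      (norm_exp_I_mul_ofReal_sub_one_sub_le (Z ω)).trans (by
        rw [← sq_abs]
        gcongr <;> exact hZ ω))
  calc ‖∫ ω, exp (I * Z ω) ∂μ - 1‖
      ≤ ‖∫ ω, (exp (I * Z ω) - 1 - I * Z ω) ∂μ‖ + ‖I * ((∫ ω, Z ω ∂μ : ℝ) : ℂ)‖ := by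
        rw [h_split]; exact norm_add_le _ _
    _ ≤ _ := by
        rw [norm_mul, norm_I, one_mul, norm_real, Real.norm_eq_abs]
        linarith

end MeasureTheory

namespace ProbabilityTheory

variable {Ω ι : Type*} [MeasurableSpace Ω] {μ : Measure Ω} [IsProbabilityMeasure μ] [Fintype ι]

lemma measureReal_abs_sum_sub_integral_ge_le {X : ι → Ω → ℝ} (h_indep : iIndepFun X μ)
    (h_meas : ∀ i, Measurable (X i)) {a x : ℝ} (hX : ∀ i ω, |X i ω - a| ≤ x) {t : ℝ}
    (ht : 0 ≤ t) :
    μ.real {ω | t ≤ |∑ i, (X i ω - μ[X i])|}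
      ≤ 2 * Real.exp (-t ^ 2 / (2 * Fintype.card ι * x ^ 2)) := by
  have h_subG : ∀ i,
      HasSubgaussianMGF (fun ω ↦ X i ω - μ[X i]) ((‖(a + x) - (a - x)‖₊ / 2) ^ 2) μ :=
    fun i ↦ hasSubgaussianMGF_of_mem_Icc (h_meas i).aemeasurable
      (ae_of_all _ fun ω ↦ by have := abs_le.1 (hX i ω); constructor <;> linarith)
  have h_param : (((‖(a + x) - (a - x)‖₊ / 2) ^ 2 : NNReal) : ℝ) = x ^ 2 := by
    simp only [add_sub_sub_cancel, NNReal.coe_pow, NNReal.coe_div, coe_nnnorm, Real.norm_eq_abs,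
      NNReal.coe_ofNat, ← two_mul, abs_mul, abs_two]
    rw [mul_div_cancel_left₀ _ two_ne_zero, sq_abs]
  have h_indep' : iIndepFun (fun i ω ↦ X i ω - μ[X i]) μ :=
    h_indep.comp (fun i (u : ℝ) ↦ u - ∫ ω, X i ω ∂μ) fun _ ↦ by fun_prop
  have h_upper := HasSubgaussianMGF.measure_sum_ge_le_of_iIndepFun h_indep' (s := Finset.univ)
    (fun i _ ↦ h_subG i) ht
  have h_lower := HasSubgaussianMGF.measure_sum_ge_le_of_iIndepFun
    (h_indep'.comp (fun _ u ↦ -u) fun _ ↦ by fun_prop) (s := Finset.univ)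
    (fun i _ ↦ (h_subG i).neg) ht
  simp only [Finset.sum_const, Finset.card_univ, nsmul_eq_mul, NNReal.coe_mul, NNReal.coe_natCast,
    h_param, ← mul_assoc, Function.comp_apply, Finset.sum_neg_distrib] at h_upper h_lower
  calc μ.real {ω | t ≤ |∑ i, (X i ω - μ[X i])|}
      ≤ μ.real ({ω | t ≤ ∑ i, (X i ω - μ[X i])} ∪ {ω | t ≤ -∑ i, (X i ω - μ[X i])}) := by
        refine measureReal_mono (fun ω hω ↦ ?_)
        simp only [Set.mem_ofPred_eq, Set.mem_union] at hω ⊢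
        exact le_abs.1 hω
    _ ≤ _ := (measureReal_union_le _ _).trans (by rw [two_mul]; exact add_le_add h_upper h_lower)

theorem measureReal_norm_average_exp_I_mul_sub_one_ge_le [Nonempty ι] {Z : ι → Ω → ℝ}
    (h_indep : iIndepFun Z μ) (h_meas : ∀ i, Measurable (Z i)) {x m τ : ℝ} (hx : x ≤ 2)
    (hZ : ∀ i ω, |Z i ω| ≤ x) (hm : ∀ i, |∫ ω, Z i ω ∂μ| ≤ m) (hτ : 0 ≤ τ) :
    μ.real {ω | m + x ^ 2 / 2 + x ^ 3 / 6 + √2 * τ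
        ≤ ‖(Fintype.card ι : ℂ)⁻¹ * ∑ i, exp (I * Z i ω) - 1‖}
      ≤ 4 * Real.exp (-(Fintype.card ι * τ ^ 2) / (2 * x ^ 2)) := by
  have hM : (0 : ℝ) < Fintype.card ι := by exact_mod_cast Fintype.card_pos
  -- `x ≤ 2` puts the cosines in a window of half-width `x` around `1`, as wide as for the sines.
  have h_cos : ∀ i ω, |Real.cos (Z i ω) - 1| ≤ x := fun i ω ↦ by
    have hx0 : 0 ≤ x := (abs_nonneg _).trans (hZ i ω)
    calc |Real.cos (Z i ω) - 1| ≤ |Z i ω| ^ 2 / 2 := sq_abs (Z i ω) ▸ Real.abs_cos_sub_one_le _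
      _ ≤ x ^ 2 / 2 := by gcongr; exact hZ i ω
      _ ≤ x := by nlinarith
  have h_sin : ∀ i ω, |Real.sin (Z i ω) - 0| ≤ x := fun i ω ↦
    (sub_zero (Real.sin (Z i ω))).symm ▸ Real.abs_sin_le_abs.trans (hZ i ω)
  have h_cos_tail := measureReal_abs_sum_sub_integral_ge_le (μ := μ)
    (h_indep.comp (fun _ ↦ Real.cos) fun _ ↦ Real.measurable_cos)
    (fun i ↦ (h_meas i).cos) h_cos (mul_nonneg hM.le hτ)
  have h_sin_tail := measureReal_abs_sum_sub_integral_ge_le (μ := μ)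
    (h_indep.comp (fun _ ↦ Real.sin) fun _ ↦ Real.measurable_sin)
    (fun i ↦ (h_meas i).sin) h_sin (mul_nonneg hM.le hτ)
  have h_event : {ω | m + x ^ 2 / 2 + x ^ 3 / 6 + √2 * τ
        ≤ ‖(Fintype.card ι : ℂ)⁻¹ * ∑ i, exp (I * Z i ω) - 1‖}
      ⊆ {ω | Fintype.card ι * τ ≤ |∑ i, (Real.cos (Z i ω) - ∫ ω', Real.cos (Z i ω') ∂μ)|}
        ∪ {ω | Fintype.card ι * τ ≤ |∑ i, (Real.sin (Z i ω) - ∫ ω', Real.sin (Z i ω') ∂μ)|} := by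
    intro ω hω
    have := le_abs_re_or_le_abs_im_sum_sub_of_le_norm_average_sub_one
      (e := fun i ↦ ∫ ω', exp (I * Z i ω') ∂μ)
      (fun i ↦ (norm_integral_exp_I_mul_sub_one_le (h_meas i) (hZ i)).trans (by linarith [hm i])) hω
    simpa [re_integral_exp_I_mul, im_integral_exp_I_mul, h_meas, re_exp_I_mul_ofReal,
      im_exp_I_mul_ofReal] using this
  have h_exponent : -(Fintype.card ι * τ) ^ 2 / (2 * Fintype.card ι * x ^ 2)
      = -(Fintype.card ι * τ ^ 2) / (2 * x ^ 2) := by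
    field_simp
  calc μ.real _ ≤ _ := measureReal_mono h_event
    _ ≤ _ := measureReal_union_le _ _
    _ ≤ 4 * Real.exp (-(Fintype.card ι * τ ^ 2) / (2 * x ^ 2)) := by
      simp only [Function.comp_apply, h_exponent] at h_cos_tail h_sin_tail
      linarith

end ProbabilityTheory

lemma abs_two_mul_pi_mul_div_le_pi {k D : ℝ} (hD : 0 ≤ D) (hk : |2 * k| ≤ D) :
    |2 * Real.pi * k / D| ≤ Real.pi := by
  rw [show 2 * Real.pi * k / D = Real.pi * (2 * k) / D by ring, abs_div, abs_mul,
    abs_of_pos Real.pi_pos, abs_of_nonneg hD]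
  exact div_le_of_le_mul₀ hD Real.pi_pos.le (mul_le_mul_of_nonneg_left hk Real.pi_pos.le)

lemma srL1_two_mul_pi_mul_div_le (k : ℤ × ℤ) {D : ℝ} (hD : 0 ≤ D) (hk₁ : |2 * (k.1 : ℝ)| ≤ D)
    (hk₂ : |2 * (k.2 : ℝ)| ≤ D) :
    srL1 (2 * Real.pi * k.1 / D, 2 * Real.pi * k.2 / D) ≤ 2 * Real.pi := by
  have h₁ := abs_two_mul_pi_mul_div_le_pi hD hk₁
  have h₂ := abs_two_mul_pi_mul_div_le_pi hD hk₂
  rw [srL1]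
  linarith

lemma srL1_pos {q : ℝ × ℝ} (hq : q ≠ 0) : 0 < srL1 q := by
  obtain ⟨a, b⟩ := q
  contrapose! hq
  rw [srL1] at hq
  have ha : a = 0 := abs_eq_zero.1 (by linarith [abs_nonneg a, abs_nonneg b, hq])
  have hb : b = 0 := abs_eq_zero.1 (by linarith [abs_nonneg a, abs_nonneg b, hq])
  simp [ha, hb]

lemma abs_dot_le_srL2_mul_srL2 (q v : ℝ × ℝ) : |q.1 * v.1 + q.2 * v.2| ≤ srL2 q * srL2 v := by
  rw [srL2, srL2, ← Real.sqrt_mul (by positivity)]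
  exact Real.abs_le_sqrt (by nlinarith [sq_nonneg (q.1 * v.2 - q.2 * v.1)])

lemma abs_integral_dot_le_srL2_mul_srL2 {Ω : Type*} [MeasurableSpace Ω] {μ : Measure Ω}
    (q : ℝ × ℝ) {v : Ω → ℝ × ℝ} (h₁ : Integrable (fun ω ↦ (v ω).1) μ)
    (h₂ : Integrable (fun ω ↦ (v ω).2) μ) :
    |∫ ω, q.1 * (v ω).1 + q.2 * (v ω).2 ∂μ|
      ≤ srL2 q * srL2 (∫ ω, (v ω).1 ∂μ, ∫ ω, (v ω).2 ∂μ) := by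
  rw [integral_add (h₁.const_mul _) (h₂.const_mul _), integral_const_mul, integral_const_mul]
  exact abs_dot_le_srL2_mul_srL2 q (_, _)

lemma abs_dot_le_srL1_mul {q v : ℝ × ℝ} {a : ℝ} (hv : |v.1| ≤ a ∧ |v.2| ≤ a) :
    |q.1 * v.1 + q.2 * v.2| ≤ srL1 q * a := by
  calc |q.1 * v.1 + q.2 * v.2| ≤ |q.1| * |v.1| + |q.2| * |v.2| := by
        simpa only [abs_mul] using abs_add_le (q.1 * v.1) (q.2 * v.2)
    _ ≤ srL1 q * a := by rw [srL1, add_mul]; gcongr <;> simp [hv.1, hv.2]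

lemma srG_zero {Ω : Type*} (r nd : ℕ) (b : Fin r × Fin r → Fin nd → Ω → ℝ × ℝ) (q : ℝ × ℝ)
    (ω : Ω) :
    srG r nd b 0 q ω = (Fintype.card ((Fin r × Fin r) × Fin nd) : ℂ)⁻¹ *
      ∑ p : (Fin r × Fin r) × Fin nd,
        exp (I * ((q.1 * (b p.1 p.2 ω).1 + q.2 * (b p.1 p.2 ω).2 : ℝ) : ℂ)) := by
  simp [srG, Fintype.sum_prod_type, sq]

theorem stmt_7_general
    {Ω : Type*} [MeasureSpace Ω] [IsProbabilityMeasure (ℙ : Measure Ω)]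
    (r N nd : ℕ) (hr : 2 ≤ r) (hnd : 1 ≤ nd)
    (ε εr : ℝ) (hε : 0 < ε) (hεr : εr = ε * r)
    (b : Fin r × Fin r → Fin nd → Ω → ℝ × ℝ)
    (hbmeas : ∀ d j, Measurable (b d j))
    (hbdd : ∀ d j ω, |(b d j ω).1| ≤ εr ∧ |(b d j ω).2| ≤ εr)
    (hindep : iIndepFun
      (fun p : (Fin r × Fin r) × Fin nd => b p.1 p.2) ℙ)
    (k' : ℤ × ℤ)
    (hk'HR : -(r * N : ℤ) ≤ 2 * k'.1 ∧ 2 * k'.1 < r * N ∧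
             -(r * N : ℤ) ≤ 2 * k'.2 ∧ 2 * k'.2 < r * N)
    (qγ : ℝ × ℝ)
    (hqγ : qγ = (2 * Real.pi * (k'.1 : ℝ) / ((r : ℝ) * N),
                 2 * Real.pi * (k'.2 : ℝ) / ((r : ℝ) * N)))
    (μv : ℝ × ℝ) (hμ : ∀ d j, μv = (∫ ω, (b d j ω).1, ∫ ω, (b d j ω).2))
    (hεπ : ε ≤ 1 / (Real.pi * r)) (hq0 : qγ ≠ 0) (c : ℝ) (hc : 0 < c) :
    (ℙ {ω | srL2 qγ * srL2 μv + srL1 qγ ^ 2 * εr ^ 2 / 2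
          + Real.sqrt 2 * (c * srL1 qγ * ε + srL1 qγ ^ 3 * εr ^ 3 / 3)
        ≤ ‖srG r nd b 0 qγ ω - 1‖}).toReal
      ≤ 4 * Real.exp (-(c ^ 2 * nd) / 8) := by
  have : Nonempty ((Fin r × Fin r) × Fin nd) := ⟨⟨⟨0, by omega⟩, ⟨0, by omega⟩⟩, ⟨0, by omega⟩⟩
  have hL : 0 < srL1 qγ := srL1_pos hq0
  have hεr0 : 0 ≤ εr := by rw [hεr]; positivity
  have hx : srL1 qγ * εr ≤ 2 := calc
    srL1 qγ * εr ≤ 2 * Real.pi * (1 / Real.pi) := by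
      gcongr
      · exact hqγ ▸ srL1_two_mul_pi_mul_div_le k' (by positivity)
          (by exact_mod_cast abs_le.2 ⟨hk'HR.1, hk'HR.2.1.le⟩)
          (by exact_mod_cast abs_le.2 ⟨hk'HR.2.2.1, hk'HR.2.2.2.le⟩)
      · rwa [hεr, ← le_div_iff₀ (by positivity), div_div]
    _ = 2 := by field_simp
  have h_mean : ∀ p : (Fin r × Fin r) × Fin nd,
      |∫ ω, qγ.1 * (b p.1 p.2 ω).1 + qγ.2 * (b p.1 p.2 ω).2| ≤ srL2 qγ * srL2 μv := fun ⟨d, j⟩ ↦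
    hμ d j ▸ abs_integral_dot_le_srL2_mul_srL2 qγ
      (.of_bound (hbmeas d j).fst.aestronglyMeasurable εr (ae_of_all _ fun ω ↦ (hbdd d j ω).1))
      (.of_bound (hbmeas d j).snd.aestronglyMeasurable εr (ae_of_all _ fun ω ↦ (hbdd d j ω).2))
  have h_tail := measureReal_norm_average_exp_I_mul_sub_one_ge_le (μ := ℙ)
    (hindep.comp (fun _ v ↦ qγ.1 * v.1 + qγ.2 * v.2) fun _ ↦ by fun_prop)
    (fun p ↦ by fun_prop) hx (fun p ω ↦ abs_dot_le_srL1_mul (hbdd p.1 p.2 ω)) h_mean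
    (τ := c * srL1 qγ * ε) (by positivity)
  have h_exponent : -(Fintype.card ((Fin r × Fin r) × Fin nd) * (c * srL1 qγ * ε) ^ 2)
      / (2 * (srL1 qγ * εr) ^ 2) = -(c ^ 2 * nd) / 2 := by
    simp only [Fintype.card_prod, Fintype.card_fin, Nat.cast_mul, hεr]
    field_simp
  rw [← measureReal_def]
  refine (measureReal_mono fun ω hω ↦ ?_).trans (h_tail.trans ?_)
  · rw [Set.mem_ofPred_eq, srG_zero] at hω
    refine le_trans ?_ hω
    have h_cube : 0 ≤ srL1 qγ ^ 3 * εr ^ 3 := by positivity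
    rw [mul_pow, mul_pow]
    nlinarith [Real.one_lt_sqrt_two]
  · rw [h_exponent]
    gcongr 4 * Real.exp ?_
    have : 0 ≤ c ^ 2 * nd := by positivity
    linarith

/-- Concentration inequality (29) for the main approximation coefficient `G_γ(k′)`. -/
theorem stmt_7
    {Ω : Type*} [MeasureSpace Ω] [IsProbabilityMeasure (ℙ : Measure Ω)]
    (r N nd : ℕ) (hr : 2 ≤ r) (hN : 1 ≤ N) (hnd : 1 ≤ nd)
    (ε εr : ℝ) (hε : 0 < ε) (hεr : εr = ε * r)
    (b : Fin r × Fin r → Fin nd → Ω → ℝ × ℝ)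
    (hbmeas : ∀ d j, Measurable (b d j))
    (hbdd : ∀ d j ω, |(b d j ω).1| ≤ εr ∧ |(b d j ω).2| ≤ εr)
    (hindep : iIndepFun
      (fun p : (Fin r × Fin r) × Fin nd => b p.1 p.2) ℙ)
    (k' k γ : ℤ × ℤ)
    (hk'γ : k' = (k.1 + γ.1 * N, k.2 + γ.2 * N))
    (hk'HR : -(r * N : ℤ) ≤ 2 * k'.1 ∧ 2 * k'.1 < r * N ∧
             -(r * N : ℤ) ≤ 2 * k'.2 ∧ 2 * k'.2 < r * N)
    (hkLR : -(N : ℤ) ≤ 2 * k.1 ∧ 2 * k.1 < N ∧ -(N : ℤ) ≤ 2 * k.2 ∧ 2 * k.2 < N)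
    (qγ : ℝ × ℝ)
    (hqγ : qγ = (2 * Real.pi * (k'.1 : ℝ) / ((r : ℝ) * N),
                 2 * Real.pi * (k'.2 : ℝ) / ((r : ℝ) * N)))
    (hiid : ∀ d j d' j', IdentDistrib (b d j) (b d' j') ℙ ℙ)
    (μv : ℝ × ℝ) (hμ : ∀ d j, μv = (∫ ω, (b d j ω).1, ∫ ω, (b d j ω).2))
    (hεπ : ε ≤ 1 / (Real.pi * r)) (hq0 : qγ ≠ 0) (c : ℝ) (hc : 0 < c) :
    (ℙ {ω | srL2 qγ * srL2 μv + srL1 qγ ^ 2 * εr ^ 2 / 2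
          + Real.sqrt 2 * (c * srL1 qγ * ε + srL1 qγ ^ 3 * εr ^ 3 / 3)
        ≤ ‖srG r nd b 0 qγ ω - 1‖}).toReal
      ≤ 4 * Real.exp (-(c ^ 2 * nd) / 8) :=
  stmt_7_general r N nd hr hnd ε εr hε hεr b hbmeas hbdd hindep k' hk'HR qγ hqγ μv hμ hεπ hq0 c hc
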